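/- In Lewis' system Va = ⟨PC, ID, CSO, DAE; RCK⟩ extended with the rule RE of interchange of logical equivalents, the axiom MOD' is derivable: ⊢ (¬φ > φ) → (ψ > φ). -/
import Mathlib


inductive Form where
  | var : Nat → Form
  | bot : Form
  | neg : Form → Form
  | conj : Form → Form → Form
  | disj : Form → Form → Form
  | imp : Form → Form → Form
  | cond : Form → Form → Form

def Form.iff (p q : Form) : Form := Form.conj (Form.imp p q) (Form.imp q p)

/-- A boolean valuation respecting the classical connectives
(conditional subformulas are treated as atoms). -/
def ClassVal (v : Form → Bool) : Prop :=
  v Form.bot = false ∧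
  (∀ p, v (Form.neg p) = ! v p) ∧
  (∀ p q, v (Form.conj p q) = (v p && v q)) ∧
  (∀ p q, v (Form.disj p q) = (v p || v q)) ∧
  (∀ p q, v (Form.imp p q) = (! v p || v q))

/-- Classical tautologies. -/
def IsTaut (p : Form) : Prop := ∀ v, ClassVal v → v p = true

def conjList (l : List Form) : Form := l.foldr Form.conj (Form.neg Form.bot)

/-- Lewis' system Va = ⟨PC, ID, CSO, DAE; RCK⟩ extended with RE
(given via RCEA and RCEC, which suffice for replacement of equivalents). -/
inductive Der : Form → Prop where
  | taut : ∀ p, IsTaut p → Der p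
  | mp : ∀ p q, Der (Form.imp p q) → Der p → Der q
  | id : ∀ p, Der (Form.cond p p)
  | cso : ∀ p q r, Der (Form.imp (Form.conj (Form.cond p q) (Form.cond q p))
      (Form.iff (Form.cond p r) (Form.cond q r)))
  | dae : ∀ p q r, Der (Form.disj (Form.cond (Form.disj p q) p)
      (Form.disj (Form.cond (Form.disj p q) q)
        (Form.iff (Form.cond (Form.disj p q) r)
          (Form.conj (Form.cond p r) (Form.cond q r)))))
  | rck : ∀ (l : List Form) (p q : Form), Der (Form.imp (conjList l) q) →
      Der (Form.imp (conjList (l.map (Form.cond p))) (Form.cond p q))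
  | rcea : ∀ p q r, Der (Form.iff p q) → Der (Form.iff (Form.cond p r) (Form.cond q r))
  | rcec : ∀ p q r, Der (Form.iff p q) → Der (Form.iff (Form.cond r p) (Form.cond r q))


lemma der_mp' {a b : Form} (h : Der (Form.imp a b)) (ha : Der a) : Der b :=
  Der.mp a b h ha

lemma cond_weak (a b c : Form) (h : IsTaut (Form.imp b c)) :
    Der (Form.imp (Form.cond a b) (Form.cond a c)) := by
  have h1 : Der (Form.imp (conjList [b]) c) := by
    apply Der.taut
    intro v hv
    have hb := h v hv
    obtain ⟨e0,e1,e2,e3,e4⟩ := hv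
    simp only [conjList, List.foldr, e0,e1,e2,e3,e4] at hb ⊢
    generalize v b = x at *
    generalize v c = y at *
    cases x <;> cases y <;> simp_all
  have h2 := Der.rck [b] a c h1
  simp only [conjList, List.map, List.foldr] at h2
  refine der_mp' (Der.taut _ ?_) h2
  intro v hv
  obtain ⟨e0,e1,e2,e3,e4⟩ := hv
  simp only [e0,e1,e2,e3,e4]
  generalize v (Form.cond a b) = x
  generalize v (Form.cond a c) = y
  revert x y
  decide

lemma cond_taut (a c : Form) (h : IsTaut (Form.imp a c)) : Der (Form.cond a c) :=
  der_mp' (cond_weak a a c h) (Der.id a)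

lemma vac (p r : Form) :
    Der (Form.imp (Form.cond (Form.neg p) p) (Form.cond (Form.neg p) r)) := by
  have h1 : Der (Form.imp (conjList [Form.neg p, p]) r) := by
    apply Der.taut
    intro v hv
    obtain ⟨e0,e1,e2,e3,e4⟩ := hv
    simp only [conjList, List.foldr, e0,e1,e2,e3,e4]
    generalize v p = x
    generalize v r = y
    revert x y
    decide
  have h2 := Der.rck [Form.neg p, p] (Form.neg p) r h1
  simp only [conjList, List.map, List.foldr] at h2
  have h3 := Der.id (Form.neg p)
  refine der_mp' (der_mp' (Der.taut _ ?_) h2) h3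
  intro v hv
  obtain ⟨e0,e1,e2,e3,e4⟩ := hv
  simp only [e0,e1,e2,e3,e4]
  generalize v (Form.cond (Form.neg p) (Form.neg p)) = x
  generalize v (Form.cond (Form.neg p) p) = y
  generalize v (Form.cond (Form.neg p) r) = z
  revert x y z
  decide

/-- MOD' is derivable: (¬φ > φ) → (ψ > φ). -/
theorem mod'_derivable (p q : Form) :
    Der (Form.imp (Form.cond (Form.neg p) p) (Form.cond q p)) := by
  have tA : IsTaut (Form.imp (Form.conj p q) p) := by
    intro v hv
    obtain ⟨e0,e1,e2,e3,e4⟩ := hv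
    simp only [e0,e1,e2,e3,e4]
    generalize v p = x
    generalize v q = y
    revert x y
    decide
  have tB : IsTaut (Form.imp (Form.conj (Form.neg p) q) (Form.neg p)) := by
    intro v hv
    obtain ⟨e0,e1,e2,e3,e4⟩ := hv
    simp only [e0,e1,e2,e3,e4]
    generalize v p = x
    generalize v q = y
    revert x y
    decide
  have dA : Der (Form.cond (Form.conj p q) p) := cond_taut _ _ tA
  have dB : Der (Form.cond (Form.conj (Form.neg p) q) (Form.neg p)) := cond_taut _ _ tB
  have d3 : Der (Form.imp (Form.cond (Form.disj (Form.conj p q) (Form.conj (Form.neg p) q)) (Form.conj p q)) (Form.cond (Form.disj (Form.conj p q) (Form.conj (Form.neg p) q)) p)) := cond_weak _ _ _ tA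
  have d4 : Der (Form.imp (Form.cond (Form.disj (Form.conj p q) (Form.conj (Form.neg p) q)) (Form.conj (Form.neg p) q)) (Form.cond (Form.disj (Form.conj p q) (Form.conj (Form.neg p) q)) (Form.neg p))) := cond_weak _ _ _ tB
  have d1 := vac p (Form.disj (Form.conj p q) (Form.conj (Form.neg p) q))
  have d2 := vac p (Form.conj (Form.neg p) q)
  have fdae := Der.dae (Form.conj p q) (Form.conj (Form.neg p) q) p
  have f8 := Der.cso (Form.disj (Form.conj p q) (Form.conj (Form.neg p) q)) (Form.neg p) p
  have f11 := Der.cso (Form.conj (Form.neg p) q) (Form.neg p) p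
  have fiff : Der (Form.iff q (Form.disj (Form.conj p q) (Form.conj (Form.neg p) q))) := by
    apply Der.taut
    intro v hv
    obtain ⟨e0,e1,e2,e3,e4⟩ := hv
    simp only [Form.iff, e0,e1,e2,e3,e4]
    generalize v p = x
    generalize v q = y
    revert x y
    decide
  have f1 := Der.rcea q (Form.disj (Form.conj p q) (Form.conj (Form.neg p) q)) p fiff
  refine der_mp' (der_mp' (der_mp' (der_mp' (der_mp' (der_mp' (der_mp' (der_mp' (der_mp' (der_mp' (Der.taut _ ?_) dA) dB) d3) d4) d1) d2) fdae) f8) f11) f1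
  intro v hv
  obtain ⟨e0,e1,e2,e3,e4⟩ := hv
  simp only [Form.iff, e0,e1,e2,e3,e4]
  generalize v (Form.cond (Form.conj p q) p) = b0
  generalize v (Form.cond (Form.conj (Form.neg p) q) (Form.neg p)) = b1
  generalize v (Form.cond (Form.disj (Form.conj p q) (Form.conj (Form.neg p) q)) (Form.conj p q)) = b2
  generalize v (Form.cond (Form.disj (Form.conj p q) (Form.conj (Form.neg p) q)) p) = b3
  generalize v (Form.cond (Form.disj (Form.conj p q) (Form.conj (Form.neg p) q)) (Form.conj (Form.neg p) q)) = b4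
  generalize v (Form.cond (Form.disj (Form.conj p q) (Form.conj (Form.neg p) q)) (Form.neg p)) = b5
  generalize v (Form.cond (Form.neg p) p) = b6
  generalize v (Form.cond (Form.neg p) (Form.disj (Form.conj p q) (Form.conj (Form.neg p) q))) = b7
  generalize v (Form.cond (Form.neg p) (Form.conj (Form.neg p) q)) = b8
  generalize v (Form.cond (Form.conj (Form.neg p) q) p) = b9
  generalize v (Form.cond q p) = b10
  revert b0 b1 b2 b3 b4 b5 b6 b7 b8 b9 b10
  decide
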